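/- Define c_n by the identity in ℝ[[X]]: Σ_{n≥0} 4^{C(n,2)} X^n/n! = exp(Σ_{n≥1} c_n X^n/n!), and define it_k(3) by Σ_{k≥1} it_k(3) X^k/k! = 1 − (Σ_{n≥0} 4^{C(n,2)} X^n/n!)^{−1}. Then for every integer r ≥ 0, as n → ∞, c_n/4^{C(n,2)} = 1 − Σ_{k=1}^{r} it_k(3)·C(n,k)·4^{k(k+1)/2}/4^{kn} + O(n^{r+1}/4^{(r+1)n}). -/

import Mathlib

/-!
Let `a n = 4 ^ C(n,2) / n!` and `A = ∑ a n Xⁿ`. From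
`a k * a (n - k) = C(n,k) a n / 4 ^ (k (n - k))` one sees that `a` is gargantuan: in a convolution
with `a`, the terms with `r ≤ k ≤ n - r` add up to `O(a (n - r))`, so only the two ends of a
convolution matter. Splitting `A * A⁻¹ = 1` this way and inducting on `r` gives
`[Xⁿ] A⁻¹ = ∑_{t<r} [Xᵗ](-A⁻²) a (n - t) + O(a (n - r))`. For `C = log A`, the identity
`C' = A' A⁻¹` reads `n [Xⁿ] C = ∑ k a k [Xⁿ⁻ᵏ] A⁻¹`; the same splitting gives
`[Xⁿ] C = ∑_{t≤r} [Xᵗ] A⁻¹ a (n - t) + O(a (n - r - 1))`, the terms with an extra factor `t`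
cancelling because `(A⁻¹)' = -A⁻² A'`. Finally `[Xᵗ] A⁻¹ = -it_t(3) / t!` for `t ≥ 1`, and
`a (n - r - 1) / a n = O(n ^ (r + 1) / 4 ^ ((r + 1) n))`.
-/

open Filter Asymptotics Finset

/-- A real sequence `u` is *gargantuan* if `u (n-1) / u n → 0` and, for every `r ≥ 1`,
`∑_{k=r}^{n-r} |u k * u (n-k)| = O(u (n-r))` as `n → ∞`. -/
def Gargantuan (u : ℕ → ℝ) : Prop :=
  Tendsto (fun n => u (n - 1) / u n) atTop (nhds 0) ∧
    ∀ r : ℕ, 1 ≤ r →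
      (fun n => ∑ k ∈ Finset.Icc r (n - r), |u k * u (n - k)|) =O[atTop]
        fun n => u (n - r)

/-- The exponential `exp C` of a formal power series `C` (intended for `C` with zero
constant term): the coefficient of `X^n` is `∑_{k=0}^{n} [X^n] (C^k) / k!`. -/
noncomputable def expPS (C : PowerSeries ℝ) : PowerSeries ℝ :=
  PowerSeries.mk fun n =>
    ∑ k ∈ Finset.range (n + 1), (PowerSeries.coeff (R := ℝ) n (C ^ k)) / (Nat.factorial k)

open PowerSeries

theorem sum_Icc_one_eq_sum_range {M : Type*} [AddCommMonoid M] (f : ℕ → M) (n : ℕ) :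
    ∑ k ∈ Icc 1 n, f k = ∑ k ∈ range n, f (k + 1) := by
  rw [range_eq_Ico, sum_Ico_add' f 0 n 1, zero_add, Ico_add_one_right_eq_Icc]

theorem sum_Icc_split_ends {M : Type*} [AddCommMonoid M] (f : ℕ → M) {r n : ℕ}
    (h : 2 * r + 1 ≤ n) :
    ∑ k ∈ Icc r (n - r), f k = f r + ∑ k ∈ Icc (r + 1) (n - (r + 1)), f k + f (n - r) := by
  rw [Icc_eq_cons_Ioc (by omega), sum_cons, ← Icc_add_one_left_eq_Ioc,
    show n - r = n - (r + 1) + 1 by omega, sum_Icc_succ_top (by omega), add_assoc]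

theorem sum_Icc_one_split {M : Type*} [AddCommMonoid M] (f : ℕ → M) {r n : ℕ}
    (h : 2 * r + 1 ≤ n) :
    ∑ k ∈ Icc 1 n, f k = ∑ k ∈ Icc 1 r, f k + ∑ k ∈ Icc (r + 1) (n - (r + 1)), f k +
      ∑ m ∈ range (r + 1), f (n - m) := by
  have htail : ∑ k ∈ Ioc (n - (r + 1)) n, f k = ∑ m ∈ range (r + 1), f (n - m) := by
    refine sum_nbij' (fun k => n - k) (fun m => n - m) ?_ ?_ ?_ ?_ ?_ <;> intro k hk <;>
      simp only [mem_Ioc, mem_range] at hk ⊢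
    all_goals first | omega | congr 1; omega
  rw [← htail, Icc_add_one_left_eq_Ioc, ← zero_add 1, Icc_add_one_left_eq_Ioc,
    Icc_add_one_left_eq_Ioc, sum_Ioc_consecutive _ (by omega) (by omega),
    sum_Ioc_consecutive _ (by omega) (by omega)]

theorem sum_Icc_sum_range_eq {M : Type*} [AddCommMonoid M] (F : ℕ → ℕ → M) (r : ℕ) :
    ∑ k ∈ Icc 1 r, ∑ j ∈ range (r + 1 - k), F k j =
      ∑ t ∈ range (r + 1), ∑ k ∈ Icc 1 t, F k (t - k) := by
  conv_rhs => rw [sum_comm' (t' := Icc 1 r) (s' := fun k => Ico k (r + 1)) (fun t k => by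
    simp only [mem_range, mem_Icc, mem_Ico]; omega)]
  refine sum_congr rfl fun k _ => ?_
  rw [sum_Ico_eq_sum_range]
  simp

theorem Nat.choose_two_add (l m : ℕ) :
    (l + m).choose 2 = l.choose 2 + m.choose 2 + l * m := by
  apply Nat.cast_injective (R := ℚ)
  push_cast [Nat.cast_choose_two]
  ring

theorem Nat.le_mul_sub_of_le_of_le_sub {r k n : ℕ} (h₁ : r ≤ k) (h₂ : k ≤ n - r) :
    r * (n - r) ≤ k * (n - k) := by
  obtain ⟨i, rfl⟩ := Nat.exists_eq_add_of_le h₁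
  obtain ⟨j, hj⟩ := Nat.exists_eq_add_of_le h₂
  rw [hj, show n - (r + i) = r + j by omega]
  nlinarith

theorem Asymptotics.IsBigO.of_natCast_mul {x y : ℕ → ℝ}
    (h : (fun n : ℕ => (n : ℝ) * x n) =O[atTop] fun n => (n : ℝ) * y n) : x =O[atTop] y := by
  refine ((isBigO_refl (fun n : ℕ => (n : ℝ)⁻¹) atTop).mul h).congr' ?_ ?_ <;>
    filter_upwards [eventually_ge_atTop 1] with n hn <;>
    exact inv_mul_cancel_left₀ (by positivity) _

theorem Asymptotics.isBigO_natCast_mul_self (x : ℕ → ℝ) :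
    x =O[atTop] fun n => (n : ℝ) * x n :=
  IsBigO.of_bound 1 <| by
    filter_upwards [eventually_ge_atTop 1] with n hn
    rw [norm_mul, one_mul, Real.norm_natCast]
    exact le_mul_of_one_le_left (norm_nonneg _) (by exact_mod_cast hn)

namespace PowerSeries

theorem coeff_mul_eq_add_sum_Icc (F G : ℝ⟦X⟧) (n : ℕ) :
    coeff n (F * G) = coeff 0 F * coeff n G + ∑ k ∈ Icc 1 n, coeff k F * coeff (n - k) G := by
  rw [coeff_mul, Nat.sum_antidiagonal_eq_sum_range_succ_mk, sum_range_succ',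
    sum_Icc_one_eq_sum_range, add_comm, Nat.sub_zero]

theorem coeff_derivative_mul (F G : ℝ⟦X⟧) (n : ℕ) :
    coeff n (d⁄dX ℝ F * G) = ∑ k ∈ Icc 1 (n + 1), k * coeff k F * coeff (n + 1 - k) G := by
  rw [coeff_mul, Nat.sum_antidiagonal_eq_sum_range_succ_mk, sum_Icc_one_eq_sum_range]
  refine sum_congr rfl fun k _ => ?_
  rw [coeff_derivative, Nat.add_sub_add_right]
  push_cast
  ring

theorem coeff_pow_eq_zero_of_lt {C : ℝ⟦X⟧} (hC : constantCoeff C = 0) {k m : ℕ}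
    (h : m < k) :
    coeff m (C ^ k) = 0 :=
  X_pow_dvd_iff.1 (pow_dvd_pow_of_dvd (X_dvd_iff.2 hC) k) m h

theorem expPS_eq_subst {C : ℝ⟦X⟧} (hC : constantCoeff C = 0) :
    expPS C = (exp ℝ).subst C := by
  ext n
  rw [coeff_subst' (HasSubst.of_constantCoeff_zero' hC), expPS, coeff_mk,
    finsum_eq_sum_of_support_subset (s := range (n + 1))]
  · refine sum_congr rfl fun k _ => ?_
    simp [coeff_exp, div_eq_inv_mul]
  · intro k hk
    by_contra h
    simp only [Function.mem_support, coe_range, Set.mem_Iio, not_lt] at hk h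
    exact hk (by rw [coeff_pow_eq_zero_of_lt hC (by omega), smul_zero])

theorem derivative_expPS {C : ℝ⟦X⟧} (hC : constantCoeff C = 0) :
    d⁄dX ℝ (expPS C) = expPS C * d⁄dX ℝ C := by
  rw [expPS_eq_subst hC, derivative_subst (HasSubst.of_constantCoeff_zero' hC), derivative_exp]

end PowerSeries

def HasExpansion (a f α : ℕ → ℝ) (r : ℕ) : Prop :=
  (fun n => f n - ∑ k ∈ range r, α k * a (n - k)) =O[atTop] fun n => a (n - r)

namespace Gargantuan

variable {a : ℕ → ℝ}

theorem isLittleO_sub_one (ha : Gargantuan a) (hpos : ∀ n, 0 < a n) :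
    (fun n => a (n - 1)) =o[atTop] a :=
  (isLittleO_iff_tendsto fun n h => absurd h (hpos n).ne').2 ha.1

theorem isBigO_sub_of_le (ha : Gargantuan a) (hpos : ∀ n, 0 < a n) {s j : ℕ} (h : s ≤ j) :
    (fun n => a (n - j)) =O[atTop] fun n => a (n - s) := by
  induction j, h using Nat.le_induction with
  | base => exact isBigO_refl _ _
  | succ j _ ih =>
    refine IsBigO.trans ?_ ih
    have := (ha.isLittleO_sub_one hpos).isBigO.comp_tendsto (tendsto_sub_atTop_nat j)
    simpa only [Function.comp_def, Nat.sub_sub, add_comm 1 j] using this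

theorem isBigO_sum_abs_mul (ha : Gargantuan a) {f g : ℕ → ℝ} (hf : f =O[⊤] a)
    (hg : g =O[⊤] a) {r : ℕ} (hr : 1 ≤ r) :
    (fun n => ∑ k ∈ Icc r (n - r), |f k * g (n - k)|) =O[atTop] fun n => a (n - r) := by
  obtain ⟨K, hK0, hK⟩ := hf.exists_nonneg
  obtain ⟨L, hL0, hL⟩ := hg.exists_nonneg
  rw [isBigOWith_top] at hK hL
  refine IsBigO.trans (IsBigO.of_bound (K * L) (Eventually.of_forall fun n => ?_)) (ha.2 r hr)
  rw [Real.norm_of_nonneg (sum_nonneg fun _ _ => abs_nonneg _),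
    Real.norm_of_nonneg (sum_nonneg fun _ _ => abs_nonneg _), mul_sum]
  refine sum_le_sum fun k _ => ?_
  rw [abs_mul, abs_mul, mul_mul_mul_comm]
  exact mul_le_mul (hK k) (hL (n - k)) (abs_nonneg _) (mul_nonneg hK0 (abs_nonneg _))

theorem eventually_sum_abs_mul_le_half (ha : Gargantuan a) (hpos : ∀ n, 0 < a n) :
    ∀ᶠ n in atTop, ∑ k ∈ Icc 1 (n - 1), |a k * a (n - k)| ≤ a n / 2 := by
  filter_upwards [((ha.2 1 le_rfl).trans_isLittleO (ha.isLittleO_sub_one hpos)).def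
    (show (0 : ℝ) < 1 / 2 by norm_num)] with n hn
  rwa [Real.norm_of_nonneg (sum_nonneg fun _ _ => abs_nonneg _),
    Real.norm_of_nonneg (hpos n).le, one_div_mul_eq_div] at hn

end Gargantuan

namespace HasExpansion

variable {a f α : ℕ → ℝ} {r : ℕ}

theorem mono (h : HasExpansion a f α r) (ha : Gargantuan a) (hpos : ∀ n, 0 < a n) {s : ℕ}
    (hsr : s ≤ r) : HasExpansion a f α s := by
  have hsplit : (fun n => f n - ∑ k ∈ range s, α k * a (n - k)) = fun n =>
      (f n - ∑ k ∈ range r, α k * a (n - k)) + ∑ k ∈ Ico s r, α k * a (n - k) := by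
    funext n
    rw [← sum_range_add_sum_Ico _ hsr]
    ring
  rw [HasExpansion, hsplit]
  exact (h.trans (ha.isBigO_sub_of_le hpos hsr)).add (IsBigO.fun_sum fun k hk =>
    (ha.isBigO_sub_of_le hpos (mem_Ico.1 hk).1).const_mul_left (α k))

theorem isBigO_sum_Icc_mul (h : HasExpansion a f α r) (ha : Gargantuan a)
    (hpos : ∀ n, 0 < a n) (w : ℕ → ℝ) :
    (fun n => ∑ k ∈ Icc 1 r, w k * f (n - k) -
        ∑ t ∈ range (r + 1), (∑ k ∈ Icc 1 t, w k * α (t - k)) * a (n - t))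
      =O[atTop] fun n => a (n - (r + 1)) := by
  have hterm : ∀ k ∈ Icc 1 r, (fun n => w k * (f (n - k) -
      ∑ j ∈ range (r + 1 - k), α j * a (n - k - j))) =O[atTop] fun n => a (n - (r + 1)) := by
    intro k hk
    have hk' := mem_Icc.1 hk
    have hshift : (fun n => a (n - (r + 1))) = fun n => a (n - k - (r + 1 - k)) := by
      funext n
      congr 1
      omega
    rw [hshift]
    exact ((h.mono ha hpos (show r + 1 - k ≤ r by omega)).comp_tendsto
      (tendsto_sub_atTop_nat k)).const_mul_left (w k)
  refine (IsBigO.fun_sum hterm).congr_left fun n => ?_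
  simp only [mul_sub, sum_sub_distrib, mul_sum, sum_mul]
  rw [sum_Icc_sum_range_eq (fun k j => w k * (α j * a (n - k - j)))]
  congr 1
  refine sum_congr rfl fun _ _ => sum_congr rfl fun k hk => ?_
  rw [Nat.sub_sub, Nat.add_sub_cancel' (mem_Icc.1 hk).2, mul_assoc]

end HasExpansion

section Inverse

variable {a : ℕ → ℝ}

theorem coeff_inv_mk_zero (ha0 : a 0 = 1) : coeff 0 (mk a)⁻¹ = 1 := by
  simp [ha0]

theorem coeff_inv_add_sum_eq_zero (ha0 : a 0 = 1) {n : ℕ} (hn : 1 ≤ n) :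
    coeff n (mk a)⁻¹ + ∑ k ∈ Icc 1 n, a k * coeff (n - k) (mk a)⁻¹ = 0 := by
  have h := congrArg (coeff n) (PowerSeries.mul_inv_cancel (mk a) (by simp [ha0]))
  simpa only [coeff_mul_eq_add_sum_Icc, coeff_one, if_neg (show n ≠ 0 by omega), coeff_mk, ha0,
    one_mul] using h

theorem coeff_inv_eq_neg_of_mk_eq_one_sub_inv {b : ℕ → ℝ} (h : mk b = 1 - (mk a)⁻¹)
    {k : ℕ} (hk : 1 ≤ k) : coeff k (mk a)⁻¹ = -b k := by
  have h := congrArg (coeff k) h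
  rw [coeff_mk, map_sub, coeff_one, if_neg (by omega), zero_sub] at h
  rw [h, neg_neg]

theorem isBigO_top_coeff_inv (ha : Gargantuan a) (hpos : ∀ n, 0 < a n) (ha0 : a 0 = 1) :
    (fun n => coeff n (mk a)⁻¹) =O[⊤] a := by
  set d := fun n => coeff n (mk a)⁻¹
  obtain ⟨N, hN⟩ := eventually_atTop.1 (ha.eventually_sum_abs_mul_le_half hpos)
  set K := 2 + ∑ m ∈ range (N + 1), |d m| / a m
  have hK : 2 ≤ K :=
    le_add_of_nonneg_right (sum_nonneg fun m _ => div_nonneg (abs_nonneg _) (hpos m).le)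
  refine isBigO_top.2 ⟨K, fun n => ?_⟩
  rw [Real.norm_eq_abs, Real.norm_of_nonneg (hpos n).le]
  -- Beyond `N` the convolution contributes at most `K * a n / 2`, and `K ≥ 2` absorbs `a n`.
  induction n using Nat.strong_induction_on with
  | _ n ih =>
  rcases le_or_gt n N with hnN | hNn
  · have h1 : |d n| / a n ≤ ∑ m ∈ range (N + 1), |d m| / a m :=
      single_le_sum (f := fun m => |d m| / a m)
        (fun m _ => div_nonneg (abs_nonneg _) (hpos m).le) (mem_range.2 (by omega))
    rw [div_le_iff₀ (hpos n)] at h1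
    nlinarith [hpos n]
  obtain ⟨m, rfl⟩ : ∃ m, n = m + 1 := ⟨n - 1, by omega⟩
  have hsmall := hN (m + 1) hNn.le
  rw [Nat.add_sub_cancel] at hsmall
  have hrec := coeff_inv_add_sum_eq_zero ha0 (Nat.le_add_left 1 m)
  rw [sum_Icc_succ_top (by omega), Nat.sub_self, coeff_inv_mk_zero ha0, mul_one] at hrec
  have hsum : |∑ k ∈ Icc 1 m, a k * d (m + 1 - k)| ≤
      K * ∑ k ∈ Icc 1 m, |a k * a (m + 1 - k)| := by
    rw [mul_sum]
    refine (abs_sum_le_sum_abs _ _).trans (sum_le_sum fun k hk => ?_)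
    have := ih (m + 1 - k) (by have := (mem_Icc.1 hk).1; omega)
    rw [abs_mul, abs_mul, abs_of_pos (hpos (m + 1 - k)), mul_left_comm]
    exact mul_le_mul_of_nonneg_left this (abs_nonneg _)
  calc |d (m + 1)| = |a (m + 1) + ∑ k ∈ Icc 1 m, a k * d (m + 1 - k)| := by
        rw [← abs_neg]; congr 1; linarith
    _ ≤ a (m + 1) + K * (a (m + 1) / 2) := by
        refine (abs_add_le _ _).trans ?_
        rw [abs_of_pos (hpos _)]
        gcongr
        exact hsum.trans (by gcongr)
    _ ≤ K * a (m + 1) := by nlinarith [hpos (m + 1)]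

theorem sum_Icc_mul_coeff_neg_inv_sq (ha0 : a 0 = 1) (t : ℕ) :
    ∑ k ∈ Icc 1 t, a k * coeff (t - k) (-(mk a)⁻¹ ^ 2) =
      -coeff t (mk a)⁻¹ - coeff t (-(mk a)⁻¹ ^ 2) := by
  have hA : mk a * (mk a)⁻¹ = 1 := PowerSeries.mul_inv_cancel (mk a) (by simp [ha0])
  have h := congrArg (coeff t) (show mk a * -(mk a)⁻¹ ^ 2 = -(mk a)⁻¹ by
    linear_combination (-(mk a)⁻¹) * hA)
  simp only [coeff_mul_eq_add_sum_Icc, coeff_mk, ha0, one_mul] at h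
  rw [map_neg (coeff t) (PowerSeries.mk a)⁻¹] at h
  linear_combination h

theorem hasExpansion_coeff_inv (ha : Gargantuan a) (hpos : ∀ n, 0 < a n) (ha0 : a 0 = 1)
    (r : ℕ) :
    HasExpansion a (fun n => coeff n (mk a)⁻¹) (fun n => coeff n (-(mk a)⁻¹ ^ 2)) r := by
  induction r with
  | zero => simpa [HasExpansion] using (isBigO_top_coeff_inv ha hpos ha0).mono le_top
  | succ r ih =>
  set d := fun n => coeff n (mk a)⁻¹
  set δ := fun n => coeff n (-(mk a)⁻¹ ^ 2)
  have hcoef : ∀ t, ∑ k ∈ Icc 1 t, a k * δ (t - k) = -d t - δ t :=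
    sum_Icc_mul_coeff_neg_inv_sq ha0
  have hhead := ih.isBigO_sum_Icc_mul ha hpos a
  have hmid : (fun n => ∑ k ∈ Icc (r + 1) (n - (r + 1)), a k * d (n - k))
      =O[atTop] fun n => a (n - (r + 1)) :=
    (IsBigO.of_norm_le fun n => norm_sum_le _ _).trans (ha.isBigO_sum_abs_mul (isBigO_refl a ⊤)
      (isBigO_top_coeff_inv ha hpos ha0) (Nat.le_add_left 1 r))
  refine ((hhead.add hmid).neg_left).congr' ?_ EventuallyEq.rfl
  filter_upwards [eventually_ge_atTop (2 * r + 1)] with n hn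
  have hrec : d n + (∑ k ∈ Icc 1 r, a k * d (n - k) +
      ∑ k ∈ Icc (r + 1) (n - (r + 1)), a k * d (n - k) +
      ∑ m ∈ range (r + 1), a (n - m) * d (n - (n - m))) = 0 := by
    rw [← sum_Icc_one_split _ hn]
    exact coeff_inv_add_sum_eq_zero ha0 (by omega)
  have htail : ∑ m ∈ range (r + 1), a (n - m) * d (n - (n - m)) =
      ∑ m ∈ range (r + 1), d m * a (n - m) :=
    sum_congr rfl fun m hm => by rw [Nat.sub_sub_self (by have := mem_range.1 hm; omega), mul_comm]
  simp only [hcoef, sub_mul, neg_mul, sum_sub_distrib, sum_neg_distrib]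
  linarith

end Inverse

section Logarithm

variable {a : ℕ → ℝ}

theorem sum_Icc_natCast_mul_coeff_neg_inv_sq (t : ℕ) :
    ∑ k ∈ Icc 1 t, k * a k * coeff (t - k) (-(mk a)⁻¹ ^ 2) = t * coeff t (mk a)⁻¹ := by
  cases t with
  | zero => simp
  | succ t =>
    have h := congrArg (coeff t) (derivative_inv' (mk a))
    rw [coeff_derivative, mul_comm (-_), coeff_derivative_mul] at h
    simp only [coeff_mk] at h
    rw [← h, Nat.cast_succ, mul_comm]

theorem natCast_mul_coeff_eq_sum_of_eq_expPS (ha0 : a 0 = 1) {C : ℝ⟦X⟧}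
    (hC : constantCoeff C = 0) (hexp : mk a = expPS C) {n : ℕ} (hn : 1 ≤ n) :
    n * coeff n C = ∑ k ∈ Icc 1 n, k * a k * coeff (n - k) (mk a)⁻¹ := by
  have hA : (mk a)⁻¹ * mk a = 1 := PowerSeries.inv_mul_cancel (mk a) (by simp [ha0])
  have hC' : d⁄dX ℝ C = d⁄dX ℝ (mk a) * (mk a)⁻¹ := by
    rw [hexp, derivative_expPS hC, ← hexp]
    linear_combination (-d⁄dX ℝ C) * hA
  obtain ⟨m, rfl⟩ : ∃ m, n = m + 1 := ⟨n - 1, by omega⟩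
  have h := congrArg (coeff m) hC'
  rw [coeff_derivative, coeff_derivative_mul] at h
  simp only [coeff_mk] at h
  rw [← h, Nat.cast_succ, mul_comm]

theorem hasExpansion_of_eq_expPS (ha : Gargantuan a) (hpos : ∀ n, 0 < a n) (ha0 : a 0 = 1)
    {C : ℝ⟦X⟧} (hC : constantCoeff C = 0) (hexp : mk a = expPS C) (r : ℕ) :
    HasExpansion a (fun n => coeff n C) (fun n => coeff n (mk a)⁻¹) (r + 1) := by
  have hhead := (hasExpansion_coeff_inv ha hpos ha0 r).isBigO_sum_Icc_mul ha hpos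
    (fun k => k * a k)
  have hmid : (fun n => ∑ k ∈ Icc (r + 1) (n - (r + 1)), k * a k * coeff (n - k) (mk a)⁻¹)
      =O[atTop] fun n => (n : ℝ) * a (n - (r + 1)) := by
    refine (IsBigO.of_norm_le fun n => ?_).trans ((isBigO_refl (fun n : ℕ => (n : ℝ)) atTop).mul
      (ha.isBigO_sum_abs_mul (isBigO_refl a ⊤) (isBigO_top_coeff_inv ha hpos ha0)
        (Nat.le_add_left 1 r)))
    refine (norm_sum_le _ _).trans ?_
    rw [mul_sum]
    refine sum_le_sum fun k hk => ?_
    rw [mul_assoc, norm_mul, Real.norm_natCast, Real.norm_eq_abs]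
    gcongr
    exact_mod_cast (mem_Icc.1 hk).2.trans (Nat.sub_le n _)
  refine IsBigO.of_natCast_mul <|
    ((hhead.trans (isBigO_natCast_mul_self _)).add hmid).congr' ?_ EventuallyEq.rfl
  filter_upwards [eventually_ge_atTop (2 * r + 1)] with n hn
  have hrec : n * coeff n C = ∑ k ∈ Icc 1 r, k * a k * coeff (n - k) (mk a)⁻¹ +
      ∑ k ∈ Icc (r + 1) (n - (r + 1)), k * a k * coeff (n - k) (mk a)⁻¹ +
      ∑ m ∈ range (r + 1),
        ((n - m : ℕ) : ℝ) * a (n - m) * coeff (n - (n - m)) (mk a)⁻¹ := by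
    rw [← sum_Icc_one_split _ hn]
    exact natCast_mul_coeff_eq_sum_of_eq_expPS ha0 hC hexp (by omega)
  have htail :
      ∑ m ∈ range (r + 1), ((n - m : ℕ) : ℝ) * a (n - m) * coeff (n - (n - m)) (mk a)⁻¹ =
        n * ∑ m ∈ range (r + 1), coeff m (mk a)⁻¹ * a (n - m) -
          ∑ m ∈ range (r + 1), m * coeff m (mk a)⁻¹ * a (n - m) := by
    rw [mul_sum, ← sum_sub_distrib]
    refine sum_congr rfl fun m hm => ?_
    have hmn : m ≤ n := by have := mem_range.1 hm; omega
    rw [Nat.sub_sub_self hmn, Nat.cast_sub hmn]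
    ring
  -- `(A⁻¹)' = -A⁻² A'` makes the head's coefficients `t [Xᵗ] A⁻¹`, cancelling the `-m` in the
  -- tail's weights `n - m`.
  simp only [sum_Icc_natCast_mul_coeff_neg_inv_sq]
  linear_combination -hrec - htail

end Logarithm

noncomputable def digraphEGFCoeff (n : ℕ) : ℝ := 4 ^ n.choose 2 / n.factorial

theorem digraphEGFCoeff_pos (n : ℕ) : 0 < digraphEGFCoeff n := by
  unfold digraphEGFCoeff; positivity

theorem digraphEGFCoeff_zero : digraphEGFCoeff 0 = 1 := by
  simp [digraphEGFCoeff]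

theorem digraphEGFCoeff_mul_sub {l n : ℕ} (h : l ≤ n) :
    digraphEGFCoeff l * digraphEGFCoeff (n - l) =
      n.choose l * digraphEGFCoeff n / 4 ^ (l * (n - l)) := by
  obtain ⟨m, rfl⟩ := Nat.exists_eq_add_of_le h
  rw [Nat.add_sub_cancel_left, digraphEGFCoeff, digraphEGFCoeff, digraphEGFCoeff,
    Nat.choose_two_add, pow_add, pow_add, Nat.cast_choose ℝ (Nat.le_add_right l m),
    Nat.add_sub_cancel_left]
  field_simp

theorem digraphEGFCoeff_mul_sub_le {l n q : ℕ} (h : l ≤ n) (hq : q ≤ l * (n - l)) :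
    digraphEGFCoeff l * digraphEGFCoeff (n - l) ≤ 2 ^ n * digraphEGFCoeff n / 4 ^ q := by
  rw [digraphEGFCoeff_mul_sub h]
  have := digraphEGFCoeff_pos n
  gcongr
  · exact_mod_cast Nat.choose_le_two_pow n l
  · norm_num

theorem tendsto_digraphEGFCoeff_sub_one_div :
    Tendsto (fun n => digraphEGFCoeff (n - 1) / digraphEGFCoeff n) atTop (nhds 0) := by
  have h :=
    (tendsto_pow_const_div_const_pow_of_one_lt 1 (show (1 : ℝ) < 4 by norm_num)).const_mul 4
  rw [mul_zero] at h
  refine h.congr' ?_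
  filter_upwards [eventually_ge_atTop 1] with n hn
  have h1 := digraphEGFCoeff_mul_sub hn
  rw [show digraphEGFCoeff 1 = 1 by simp [digraphEGFCoeff], one_mul, Nat.choose_one_right,
    one_mul] at h1
  rw [h1, show (4 : ℝ) ^ n = 4 * 4 ^ (n - 1) by rw [← pow_succ']; congr 1; omega]
  have := digraphEGFCoeff_pos n
  field_simp

theorem digraphEGFCoeff_le_mul_sub {r n : ℕ} (h : r ≤ n) :
    digraphEGFCoeff n ≤ 4 ^ (r * (n - r)) * (digraphEGFCoeff r * digraphEGFCoeff (n - r)) := by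
  rw [digraphEGFCoeff_mul_sub h, mul_div_cancel₀ _ (by positivity)]
  have := digraphEGFCoeff_pos n
  have : (1 : ℝ) ≤ n.choose r := by exact_mod_cast Nat.choose_pos h
  nlinarith

theorem sum_Icc_digraphEGFCoeff_mul_le {r n : ℕ} (hn : 2 * r + 1 ≤ n) :
    ∑ k ∈ Icc r (n - r), |digraphEGFCoeff k * digraphEGFCoeff (n - k)| ≤
      (2 + 4 ^ (2 * r + 1)) * (digraphEGFCoeff r * digraphEGFCoeff (n - r)) := by
  have hpow : (4 : ℝ) ^ n * 4 ^ (r * (n - r)) =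
      4 ^ (2 * r + 1) * 4 ^ ((r + 1) * (n - (r + 1))) := by
    rw [← pow_add, ← pow_add]
    obtain ⟨p, rfl⟩ := Nat.exists_eq_add_of_le hn
    rw [show 2 * r + 1 + p - r = r + 1 + p by omega, show 2 * r + 1 + p - (r + 1) = r + p by omega]
    ring_nf
  have hcard : ((Icc (r + 1) (n - (r + 1))).card : ℝ) ≤ n := by
    rw [Nat.card_Icc]
    exact_mod_cast (by omega : n - (r + 1) + 1 - (r + 1) ≤ n)
  have hn2 : (n : ℝ) * 2 ^ n ≤ 4 ^ n := by
    rw [show (4 : ℝ) ^ n = 2 ^ n * 2 ^ n by rw [← mul_pow]; norm_num]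
    gcongr
    exact_mod_cast Nat.lt_two_pow_self.le
  have hmid : ∑ k ∈ Icc (r + 1) (n - (r + 1)), digraphEGFCoeff k * digraphEGFCoeff (n - k) ≤
      4 ^ (2 * r + 1) * (digraphEGFCoeff r * digraphEGFCoeff (n - r)) :=
    calc ∑ k ∈ Icc (r + 1) (n - (r + 1)), digraphEGFCoeff k * digraphEGFCoeff (n - k)
        ≤ ∑ _k ∈ Icc (r + 1) (n - (r + 1)),
            2 ^ n * digraphEGFCoeff n / 4 ^ ((r + 1) * (n - (r + 1))) :=
          sum_le_sum fun k hk => digraphEGFCoeff_mul_sub_le (by have := (mem_Icc.1 hk).2; omega)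
            (Nat.le_mul_sub_of_le_of_le_sub (mem_Icc.1 hk).1 (mem_Icc.1 hk).2)
      _ ≤ n * 2 ^ n * digraphEGFCoeff n / 4 ^ ((r + 1) * (n - (r + 1))) := by
          rw [sum_const, nsmul_eq_mul, mul_div_assoc', ← mul_assoc]
          have := digraphEGFCoeff_pos n
          gcongr
      _ ≤ 4 ^ n * (4 ^ (r * (n - r)) * (digraphEGFCoeff r * digraphEGFCoeff (n - r))) /
            4 ^ ((r + 1) * (n - (r + 1))) := by
          have := digraphEGFCoeff_pos n
          gcongr
          exact digraphEGFCoeff_le_mul_sub (by omega)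
      _ = 4 ^ (2 * r + 1) * (digraphEGFCoeff r * digraphEGFCoeff (n - r)) := by
          rw [← mul_assoc, hpow]
          field_simp
  rw [sum_congr rfl fun k _ => abs_of_pos (mul_pos (digraphEGFCoeff_pos k)
    (digraphEGFCoeff_pos (n - k))), sum_Icc_split_ends _ hn, Nat.sub_sub_self (by omega)]
  linarith [mul_comm (digraphEGFCoeff (n - r)) (digraphEGFCoeff r)]

theorem gargantuan_digraphEGFCoeff : Gargantuan digraphEGFCoeff := by
  refine ⟨tendsto_digraphEGFCoeff_sub_one_div, fun r _ => ?_⟩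
  refine IsBigO.of_bound ((2 + 4 ^ (2 * r + 1)) * digraphEGFCoeff r) ?_
  filter_upwards [eventually_ge_atTop (2 * r + 1)] with n hn
  rw [Real.norm_of_nonneg (sum_nonneg fun _ _ => abs_nonneg _),
    Real.norm_of_nonneg (digraphEGFCoeff_pos _).le, mul_assoc]
  exact sum_Icc_digraphEGFCoeff_mul_le hn

theorem isBigO_digraphEGFCoeff_sub_div (s : ℕ) :
    (fun n => digraphEGFCoeff (n - s) / digraphEGFCoeff n) =O[atTop]
      fun n => (n : ℝ) ^ s / 4 ^ (s * n) := by
  refine IsBigO.of_bound (4 ^ (s * s) / digraphEGFCoeff s) ?_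
  filter_upwards [eventually_ge_atTop s] with n hn
  have hs := digraphEGFCoeff_pos s
  have hn' := digraphEGFCoeff_pos n
  have h4 : (4 : ℝ) ^ (s * n) = 4 ^ (s * (n - s)) * 4 ^ (s * s) := by
    rw [← pow_add, ← Nat.mul_add, Nat.sub_add_cancel hn]
  have hq : digraphEGFCoeff (n - s) / digraphEGFCoeff n =
      n.choose s / (digraphEGFCoeff s * 4 ^ (s * (n - s))) := by
    rw [div_eq_div_iff hn'.ne' (by positivity)]
    have := digraphEGFCoeff_mul_sub hn
    field_simp at this
    linear_combination this
  rw [Real.norm_of_nonneg (div_nonneg (digraphEGFCoeff_pos _).le hn'.le),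
    Real.norm_of_nonneg (by positivity), hq]
  calc (n.choose s : ℝ) / (digraphEGFCoeff s * 4 ^ (s * (n - s)))
      ≤ n ^ s / (digraphEGFCoeff s * 4 ^ (s * (n - s))) := by
        gcongr
        exact_mod_cast Nat.choose_le_pow n s
    _ = 4 ^ (s * s) / digraphEGFCoeff s * (n ^ s / 4 ^ (s * n)) := by
        rw [h4]
        field_simp

theorem mul_choose_mul_div_eq_mul_digraphEGFCoeff_div (x : ℝ) {k n : ℕ} (hk : k ≤ n) :
    x * n.choose k * 4 ^ (k * (k + 1) / 2) / 4 ^ (k * n) =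
      x / k.factorial * digraphEGFCoeff (n - k) / digraphEGFCoeff n := by
  have he : k * n = k * (k + 1) / 2 + (k * (n - k) + k.choose 2) := by
    rw [show k * (k + 1) / 2 = (k + 1).choose 2 by rw [Nat.choose_two_right, Nat.add_sub_cancel,
      mul_comm]]
    apply Nat.cast_injective (R := ℚ)
    push_cast [Nat.cast_choose_two, Nat.cast_sub hk]
    ring
  have := digraphEGFCoeff_mul_sub hk
  have hn' := digraphEGFCoeff_pos n
  rw [he, pow_add, pow_add]
  rw [digraphEGFCoeff] at this
  field_simp at this ⊢
  linear_combination -x * this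

theorem div_pow_choose_two_sub_one_sub_sum_eq (z : ℝ) (x : ℕ → ℝ) {r n : ℕ} (hn : r ≤ n)
    (hx : ∀ k ∈ Icc 1 r, coeff k (mk digraphEGFCoeff)⁻¹ = -(x k / k.factorial)) :
    (z / n.factorial - ∑ k ∈ range (r + 1),
        coeff k (mk digraphEGFCoeff)⁻¹ * digraphEGFCoeff (n - k)) * (digraphEGFCoeff n)⁻¹ =
      z / (4 : ℝ) ^ n.choose 2 -
        (1 - ∑ k ∈ Icc 1 r, x k * n.choose k * (4 : ℝ) ^ (k * (k + 1) / 2) / 4 ^ (k * n)) :=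
    by
  have hterm : ∀ k ∈ Icc 1 r, x k * n.choose k * (4 : ℝ) ^ (k * (k + 1) / 2) / 4 ^ (k * n) =
      -(coeff k (mk digraphEGFCoeff)⁻¹ * digraphEGFCoeff (n - k)) / digraphEGFCoeff n :=
    fun k hk => by
      rw [mul_choose_mul_div_eq_mul_digraphEGFCoeff_div _ ((mem_Icc.1 hk).2.trans hn), hx k hk]
      ring
  have hz : z / (4 : ℝ) ^ n.choose 2 = z / n.factorial / digraphEGFCoeff n := by
    rw [digraphEGFCoeff, div_div_div_cancel_right₀ (by positivity)]
  rw [sum_congr rfl hterm, ← sum_div, sum_neg_distrib, hz, sum_range_succ',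
    ← sum_Icc_one_eq_sum_range (fun k => coeff k (mk digraphEGFCoeff)⁻¹ *
      digraphEGFCoeff (n - k)), coeff_inv_mk_zero digraphEGFCoeff_zero, Nat.sub_zero]
  have := digraphEGFCoeff_pos n
  field_simp
  ring

theorem digraph_weakly_connected_general
    (c it3 : ℕ → ℝ) (hc0 : c 0 = 0)
    (hexp : (PowerSeries.mk fun n => ((4 : ℝ)) ^ (n.choose 2) / (Nat.factorial n)) =
      expPS (PowerSeries.mk fun n => c n / (Nat.factorial n)))
    (hit : (PowerSeries.mk fun k => it3 k / (Nat.factorial k)) =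
      1 - (PowerSeries.mk fun n => ((4 : ℝ)) ^ (n.choose 2) / (Nat.factorial n))⁻¹) :
    ∀ r : ℕ,
      (fun n => c n / ((4 : ℝ)) ^ (n.choose 2) -
          (1 - ∑ k ∈ Finset.Icc 1 r,
            it3 k * (n.choose k) * ((4 : ℝ)) ^ (k * (k + 1) / 2) /
              ((4 : ℝ)) ^ (k * n)))
        =O[atTop] fun n => (n : ℝ) ^ (r + 1) / ((4 : ℝ)) ^ ((r + 1) * n) := by
  intro r
  have hC : constantCoeff (PowerSeries.mk fun n => c n / n.factorial) = 0 := by simp [hc0]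
  have hγ := hasExpansion_of_eq_expPS gargantuan_digraphEGFCoeff digraphEGFCoeff_pos
    digraphEGFCoeff_zero hC hexp r
  have hinv : ∀ k ∈ Icc 1 r,
      coeff k (PowerSeries.mk digraphEGFCoeff)⁻¹ = -(it3 k / k.factorial) :=
    fun k hk => coeff_inv_eq_neg_of_mk_eq_one_sub_inv hit (mem_Icc.1 hk).1
  refine ((hγ.mul (isBigO_refl (fun n => (digraphEGFCoeff n)⁻¹) atTop)).trans ?_).congr' ?_
    EventuallyEq.rfl
  · simpa only [div_eq_mul_inv] using isBigO_digraphEGFCoeff_sub_div (r + 1)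
  filter_upwards [eventually_ge_atTop r] with n hn
  rw [coeff_mk]
  exact div_pow_choose_two_sub_one_sub_sum_eq (c n) it3 hn hinv

/-- asymptotic probability that a random labeled digraph is weakly connected. -/
theorem digraph_weakly_connected
    (c it3 : ℕ → ℝ) (hc0 : c 0 = 0) (hit0 : it3 0 = 0)
    (hexp : (PowerSeries.mk fun n => ((4 : ℝ)) ^ (n.choose 2) / (Nat.factorial n)) =
      expPS (PowerSeries.mk fun n => c n / (Nat.factorial n)))
    (hit : (PowerSeries.mk fun k => it3 k / (Nat.factorial k)) =
      1 - (PowerSeries.mk fun n => ((4 : ℝ)) ^ (n.choose 2) / (Nat.factorial n))⁻¹) :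
    ∀ r : ℕ,
      (fun n => c n / ((4 : ℝ)) ^ (n.choose 2) -
          (1 - ∑ k ∈ Finset.Icc 1 r,
            it3 k * (n.choose k) * ((4 : ℝ)) ^ (k * (k + 1) / 2) /
              ((4 : ℝ)) ^ (k * n)))
        =O[atTop] fun n => (n : ℝ) ^ (r + 1) / ((4 : ℝ)) ^ ((r + 1) * n) :=
  digraph_weakly_connected_general c it3 hc0 hexp hit
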